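/- Let g be a finite-dimensional real solvable Lie algebra whose nilradical n is isomorphic to the standard filiform Lie algebra L_l with l ≥ 4. Then dim g ≤ l + 2; that is, the codimension of the nilradical in g is at most 2. -/

import Mathlib

open scoped BigOperators

/-- `B` is an inner product on `g`: a symmetric, positive-definite bilinear form. -/
def IsInnerProduct {g : Type*} [AddCommGroup g] [Module ℝ g]
    (B : LinearMap.BilinForm ℝ g) : Prop :=
  (∀ x y : g, B x y = B y x) ∧ (∀ x : g, x ≠ 0 → 0 < B x x)

/-- The basis `E` is orthonormal with respect to the bilinear form `B`. -/
def IsOrthonormalBasis {g : Type*} [AddCommGroup g] [Module ℝ g] {ι : Type*}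
    (B : LinearMap.BilinForm ℝ g) (E : Module.Basis ι ℝ g) : Prop :=
  (∀ i, B (E i) (E i) = 1) ∧ ∀ i j, i ≠ j → B (E i) (E j) = 0

/-- `H` is the mean curvature vector of `(g, B)`: `⟨H, X⟩ = Tr (ad X)` for all `X`. -/
def IsMeanCurvature {g : Type*} [LieRing g] [LieAlgebra ℝ g]
    (B : LinearMap.BilinForm ℝ g) (H : g) : Prop :=
  ∀ X : g, B H X = LinearMap.trace ℝ g (LieAlgebra.ad ℝ g X)

/-- The Ricci form of the metric Lie algebra `(g, B)`. -/
noncomputable def ricForm {g : Type*} [LieRing g] [LieAlgebra ℝ g] {ι : Type*} [Fintype ι]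
    (B : LinearMap.BilinForm ℝ g) (E : Module.Basis ι ℝ g) (H : g) (X : g) : ℝ :=
  - B ⁅H, X⁆ X - (1/2) * (killingForm ℝ g) X X
    - (1/2) * ∑ i, B ⁅X, E i⁆ ⁅X, E i⁆
    + (1/4) * ∑ i, ∑ j, (B ⁅E i, E j⁆ X)^2

/-- `g` admits an inner product of (strictly) negative Ricci curvature. -/
def HasNegRicci (g : Type*) [LieRing g] [LieAlgebra ℝ g] : Prop :=
  ∃ B : LinearMap.BilinForm ℝ g, IsInnerProduct B ∧
    ∀ {ι : Type} [Fintype ι] (E : Module.Basis ι ℝ g), IsOrthonormalBasis B E →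
      ∀ H : g, IsMeanCurvature B H →
        ∀ X : g, X ≠ 0 → ricForm B E H X < 0

/-- `n` is the nilradical of `g`: a nilpotent Lie ideal containing every nilpotent Lie ideal. -/
def IsNilradical {g : Type*} [LieRing g] [LieAlgebra ℝ g] (n : LieIdeal ℝ g) : Prop :=
  LieRing.IsNilpotent n ∧ ∀ m : LieIdeal ℝ g, LieRing.IsNilpotent m → m ≤ n

/-- The restriction of `ad Y` to the Lie ideal `n`. -/
def adRestrict {g : Type*} [LieRing g] [LieAlgebra ℝ g] (n : LieIdeal ℝ g) (Y : g) :
    Module.End ℝ n where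
  toFun x := ⟨⁅Y, (x : g)⁆, n.lie_mem x.2⟩
  map_add' x y := by ext; simp
  map_smul' c x := by ext; simp

/-- All eigenvalues of (the complexification of) a real linear operator
have positive real part: every complex root of its characteristic polynomial
has positive real part. -/
def AllEigenvaluesPosRe {V : Type*} [AddCommGroup V] [Module ℝ V]
    [Module.Finite ℝ V] [Module.Free ℝ V] (A : Module.End ℝ V) : Prop :=
  ∀ μ : ℂ, Polynomial.aeval μ (LinearMap.charpoly A) = 0 → 0 < μ.re

/-!
Extend the basis of the nilradical by zeros to a sequence `X 0, X 1, …` (so `X i` is `X_{i+1}`)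
and let `G k` be the span of `X k, X (k + 1), …`. Since `n` is an ideal and
`⁅X 0, X i⁆ = X (i + 1)`, the Leibniz rule shows that every `ad y` preserves this flag; the one
non-formal step is `⁅y, X 1⁆ ∈ G 1`, where the Jacobi identity applied to `⁅X 1, X 2⁆ = 0` kills
the `X 0`-component because `X 3 ≠ 0`, i.e. `l ≥ 4`. The Leibniz rule also shows that the diagonal
of `ad y` on the flag is determined by its entries at `X 0` and `X 1`, so the kernel `J` of this
rank-`≤ 2` map consists of the `y` for which `ad y` lowers the flag. Commutators of
flag-preserving maps lower the flag, so `[g, g] ≤ J`. An ideal `I ≤ J` with `[I, I] ≤ n` then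
acts nilpotently on `g`, so it is nilpotent by Engel's theorem and lies in `n`; descending the
derived series gives `J ≤ n`, hence `dim g ≤ dim n + 2`.
-/

open LieAlgebra Submodule

theorem extend_val_eq_zero_of_le {α : Type*} [Zero α] {l i : ℕ} (v : Fin l → α) (h : l ≤ i) :
    Function.extend Fin.val v 0 i = 0 :=
  Function.extend_apply' _ _ _ (by rintro ⟨j, rfl⟩; omega)

section TailSpan

variable {R M : Type*} [CommRing R] [AddCommGroup M] [Module R M] (X : ℕ → M)

variable (R) in
def tailSpan (k : ℕ) : Submodule R M := span R (X '' Set.Ici k)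

variable {X}

theorem mem_tailSpan_of_le {i k : ℕ} (h : k ≤ i) : X i ∈ tailSpan R X k :=
  subset_span ⟨i, h, rfl⟩

theorem tailSpan_antitone : Antitone (tailSpan R X) :=
  fun _ _ h ↦ span_mono (Set.image_mono (Set.Ici_subset_Ici.2 h))

theorem tailSpan_zero : tailSpan R X 0 = span R (Set.range X) := by
  simp [tailSpan]

theorem tailSpan_zero_extend_val {l : ℕ} (v : Fin l → M) :
    tailSpan R (Function.extend Fin.val v 0) 0 = span R (Set.range v) := by
  have hzero : span R ((0 : ℕ → M) '' (Set.range (Fin.val : Fin l → ℕ))ᶜ) = ⊥ :=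
    span_eq_bot.2 (by rintro _ ⟨_, _, rfl⟩; rfl)
  rw [tailSpan_zero, Set.range_extend Fin.val_injective, span_union, hzero, sup_bot_eq]

theorem tailSpan_eq_bot {N : ℕ} (h : ∀ i, N ≤ i → X i = 0) : tailSpan R X N = ⊥ := by
  rw [tailSpan, span_eq_bot]
  rintro _ ⟨i, hi, rfl⟩
  exact h i hi

theorem exists_sub_smul_mem_tailSpan_succ {k : ℕ} {x : M} (hx : x ∈ tailSpan R X k) :
    ∃ t : R, x - t • X k ∈ tailSpan R X (k + 1) := by
  have hIci : Set.Ici k = insert k (Set.Ici (k + 1)) := by ext; simp; omega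
  rw [tailSpan, hIci, Set.image_insert_eq, span_insert] at hx
  obtain ⟨_, ht, y, hy, rfl⟩ := mem_sup.1 hx
  obtain ⟨t, rfl⟩ := mem_span_singleton.1 ht
  exact ⟨t, by simpa [tailSpan] using hy⟩

theorem apply_mem_tailSpan_add (f : M →ₗ[R] M) {d : ℕ}
    (hf : ∀ i, f (X i) ∈ tailSpan R X (i + d)) {k : ℕ} {x : M} (hx : x ∈ tailSpan R X k) :
    f x ∈ tailSpan R X (k + d) := by
  suffices tailSpan R X k ≤ (tailSpan R X (k + d)).comap f from this hx
  refine span_le.2 ?_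
  rintro _ ⟨i, hi, rfl⟩
  exact tailSpan_antitone (Nat.add_le_add_right hi d) (hf i)

theorem apply_apply_sub_mem_tailSpan_succ (f g : M →ₗ[R] M) (hf : ∀ i, f (X i) ∈ tailSpan R X i)
    (hg : ∀ i, g (X i) ∈ tailSpan R X i) (i : ℕ) :
    f (g (X i)) - g (f (X i)) ∈ tailSpan R X (i + 1) := by
  obtain ⟨a, ha⟩ := exists_sub_smul_mem_tailSpan_succ (hf i)
  obtain ⟨b, hb⟩ := exists_sub_smul_mem_tailSpan_succ (hg i)
  have hf' := apply_mem_tailSpan_add (d := 0) f hf hb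
  have hg' := apply_mem_tailSpan_add (d := 0) g hg ha
  have key : f (g (X i)) - g (f (X i))
      = b • (f (X i) - a • X i) + f (g (X i) - b • X i)
        - (a • (g (X i) - b • X i) + g (f (X i) - a • X i)) := by
    simp only [map_sub, map_smul, smul_sub, smul_smul, mul_comm a b]
    abel
  rw [key]
  exact sub_mem (add_mem (smul_mem _ _ ha) hf') (add_mem (smul_mem _ _ hb) hg')

end TailSpan

theorem Module.End.isNilpotent_of_mapsTo_succ {R M : Type*} [CommRing R] [AddCommGroup M]
    [Module R M] {f : Module.End R M} {G : ℕ → Submodule R M}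
    (hf : ∀ k, ∀ v ∈ G k, f v ∈ G (k + 1)) {m N : ℕ} (hm : ∀ v, (f ^ m) v ∈ G 0)
    (hN : G N = ⊥) : IsNilpotent f := by
  have hpow : ∀ k v, (f ^ (k + m)) v ∈ G k := by
    intro k
    induction k with
    | zero => simpa using hm
    | succ k ih =>
      intro v
      rw [add_right_comm, pow_succ', Module.End.mul_apply]
      exact hf k _ (ih v)
  refine ⟨N + m, LinearMap.ext fun v ↦ ?_⟩
  simpa [hN] using hpow N v

theorem LieIdeal.le_of_isSolvable {R L : Type*} [CommRing R] [LieRing L] [LieAlgebra R L]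
    [IsSolvable L] {n J : LieIdeal R L} (hJ : derivedSeries R L 1 ≤ J)
    (h : ∀ I ≤ J, ⁅I, I⁆ ≤ n → I ≤ n) : J ≤ n := by
  obtain ⟨k, hk⟩ := IsSolvable.solvable R L
  have hD : ∀ m j, k ≤ j + m → derivedSeries R L (j + 1) ≤ n := by
    intro m
    induction m with
    | zero =>
      intro j hj
      exact (derivedSeriesOfIdeal_antitone _ (by omega)).trans (hk.le.trans bot_le)
    | succ m ih =>
      intro j hj
      refine h _ ((derivedSeriesOfIdeal_antitone _ (by omega)).trans hJ) ?_
      rw [derivedSeries_def, ← derivedSeriesOfIdeal_succ]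
      exact ih (j + 1) (by omega)
  refine h J le_rfl ((LieSubmodule.mono_lie le_top le_top).trans ?_)
  simpa using hD k 0 (by omega)

/-- `L_l` with its basis shifted to `X 0, …, X (l - 1)` and continued by `X i = 0` for `i ≥ l`,
which removes the boundary cases from the bracket relations. -/
structure IsStandardFiliformSeq {L : Type*} [LieRing L] (X : ℕ → L) : Prop where
  lie_zero_eq : ∀ i, 1 ≤ i → ⁅X 0, X i⁆ = X (i + 1)
  lie_eq_zero : ∀ i j, 1 ≤ i → 1 ≤ j → ⁅X i, X j⁆ = 0

section Filiform

variable {K L : Type*} [Field K] [LieRing L] [LieAlgebra K L]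

/-- The diagonal entries of `ad y` at `X 0` and `X 1` with respect to the flag `tailSpan K X`. -/
def adDiag (X : ℕ → L) : L →ₗ[K] (L ⧸ tailSpan K X 1) × (L ⧸ tailSpan K X 2) :=
  ((tailSpan K X 1).mkQ ∘ₗ (ad K L (X 0) : L →ₗ[K] L)).prod
    ((tailSpan K X 2).mkQ ∘ₗ (ad K L (X 1) : L →ₗ[K] L))

variable {X : ℕ → L} {n : LieIdeal K L}

theorem lie_mem_tailSpan_zero (hn : (n : Submodule K L) = tailSpan K X 0) (y : L) (i : ℕ) :
    ⁅y, X i⁆ ∈ tailSpan K X 0 := by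
  have hXi : X i ∈ (n : Submodule K L) := hn ▸ mem_tailSpan_of_le (Nat.zero_le i)
  rw [← hn]
  exact n.lie_mem hXi

theorem adDiag_eq_zero_iff {y : L} :
    adDiag (K := K) X y = 0 ↔ ⁅y, X 0⁆ ∈ tailSpan K X 1 ∧ ⁅y, X 1⁆ ∈ tailSpan K X 2 := by
  simp only [adDiag, LinearMap.prod_apply, LinearMap.coe_comp, Function.prod_apply,
    Function.comp_apply, ad_apply, mkQ_apply, Prod.ext_iff, Prod.fst_zero, Prod.snd_zero,
    Quotient.mk_eq_zero]
  rw [← lie_skew (X 0) y, ← lie_skew (X 1) y, neg_mem_iff, neg_mem_iff]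

namespace IsStandardFiliformSeq

theorem lie_zero_mem_tailSpan_succ (hX : IsStandardFiliformSeq X) {k : ℕ} {v : L}
    (hv : v ∈ tailSpan K X k) : ⁅X 0, v⁆ ∈ tailSpan K X (k + 1) := by
  refine apply_mem_tailSpan_add (ad K L (X 0) : L →ₗ[K] L) (fun i ↦ ?_) hv
  rcases Nat.eq_zero_or_pos i with rfl | hi
  · simp
  · simpa [hX.lie_zero_eq i hi] using mem_tailSpan_of_le le_rfl

theorem lie_eq_zero_of_mem_tailSpan_one (hX : IsStandardFiliformSeq X) {v : L}
    (hv : v ∈ tailSpan K X 1) {j : ℕ} (hj : 1 ≤ j) : ⁅v, X j⁆ = 0 := by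
  suffices tailSpan K X 1 ≤ LinearMap.ker (ad K L (X j) : L →ₗ[K] L) by
    rw [← lie_skew, show ⁅X j, v⁆ = 0 from this hv, neg_zero]
  refine span_le.2 ?_
  rintro _ ⟨i, hi, rfl⟩
  simpa using hX.lie_eq_zero j i hj hi

theorem lie_mem_tailSpan_succ_of_mem_tailSpan_zero (hX : IsStandardFiliformSeq X) {v : L}
    (hv : v ∈ tailSpan K X 0) {j : ℕ} (hj : 1 ≤ j) : ⁅v, X j⁆ ∈ tailSpan K X (j + 1) := by
  obtain ⟨t, ht⟩ := exists_sub_smul_mem_tailSpan_succ hv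
  have hv' : v = t • X 0 + (v - t • X 0) := by abel
  rw [hv', add_lie, smul_lie, hX.lie_zero_eq j hj, hX.lie_eq_zero_of_mem_tailSpan_one ht hj,
    add_zero]
  exact smul_mem _ _ (mem_tailSpan_of_le le_rfl)

theorem lie_succ_eq (hX : IsStandardFiliformSeq X) (y : L) {j : ℕ} (hj : 1 ≤ j) :
    ⁅y, X (j + 1)⁆ = ⁅⁅y, X 0⁆, X j⁆ + ⁅X 0, ⁅y, X j⁆⁆ := by
  rw [← hX.lie_zero_eq j hj, leibniz_lie]

theorem lie_mem_tailSpan_succ_of_adDiag_eq_zero (hX : IsStandardFiliformSeq X) {y : L}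
    (hy : adDiag (K := K) X y = 0) (i : ℕ) : ⁅y, X i⁆ ∈ tailSpan K X (i + 1) := by
  obtain ⟨h0, h1⟩ := adDiag_eq_zero_iff.1 hy
  induction i with
  | zero => exact h0
  | succ i ih =>
    rcases Nat.eq_zero_or_pos i with rfl | hi
    · exact h1
    · rw [hX.lie_succ_eq y hi, hX.lie_eq_zero_of_mem_tailSpan_one h0 hi, zero_add]
      exact hX.lie_zero_mem_tailSpan_succ ih

theorem lie_one_mem_tailSpan_one (hX : IsStandardFiliformSeq X)
    (hn : (n : Submodule K L) = tailSpan K X 0) (hX3 : X 3 ≠ 0) (y : L) :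
    ⁅y, X 1⁆ ∈ tailSpan K X 1 := by
  obtain ⟨s, hs⟩ := exists_sub_smul_mem_tailSpan_succ (lie_mem_tailSpan_zero hn y 1)
  have h2 : ⁅y, X 2⁆ ∈ tailSpan K X 1 := by
    rw [hX.lie_succ_eq y le_rfl]
    exact add_mem
      (tailSpan_antitone (by omega) (hX.lie_mem_tailSpan_succ_of_mem_tailSpan_zero
        (lie_mem_tailSpan_zero hn y 0) le_rfl))
      (hX.lie_zero_mem_tailSpan_succ (lie_mem_tailSpan_zero hn y 1))
  have h12 : ⁅⁅y, X 1⁆, X 2⁆ = 0 := by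
    have := leibniz_lie y (X 1) (X 2)
    rwa [hX.lie_eq_zero 1 2 le_rfl (by omega), lie_zero, ← lie_skew (X 1),
      hX.lie_eq_zero_of_mem_tailSpan_one h2 le_rfl, neg_zero, add_zero, eq_comm] at this
  -- as `⁅y, X 1⁆ ≡ s • X 0` modulo `tailSpan K X 1`, `h12` reads `s • X 3 = 0`
  have hs3 : s • X 3 = 0 := by
    have hv : ⁅y, X 1⁆ = s • X 0 + (⁅y, X 1⁆ - s • X 0) := by abel
    rwa [hv, add_lie, smul_lie, hX.lie_zero_eq 2 (by omega),
      hX.lie_eq_zero_of_mem_tailSpan_one hs (by omega), add_zero] at h12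
  rw [(smul_eq_zero.1 hs3).resolve_right hX3, zero_smul, sub_zero] at hs
  exact hs

theorem lie_mem_tailSpan (hX : IsStandardFiliformSeq X)
    (hn : (n : Submodule K L) = tailSpan K X 0) (hX3 : X 3 ≠ 0) (y : L) (i : ℕ) :
    ⁅y, X i⁆ ∈ tailSpan K X i := by
  induction i with
  | zero => exact lie_mem_tailSpan_zero hn y 0
  | succ i ih =>
    rcases Nat.eq_zero_or_pos i with rfl | hi
    · exact hX.lie_one_mem_tailSpan_one hn hX3 y
    · rw [hX.lie_succ_eq y hi]
      exact add_mem
        (hX.lie_mem_tailSpan_succ_of_mem_tailSpan_zero (lie_mem_tailSpan_zero hn y 0) hi)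
        (hX.lie_zero_mem_tailSpan_succ ih)

theorem adDiag_lie (hX : IsStandardFiliformSeq X) (hn : (n : Submodule K L) = tailSpan K X 0)
    (hX3 : X 3 ≠ 0) (z w : L) : adDiag (K := K) X ⁅z, w⁆ = 0 := by
  have h i : ⁅⁅z, w⁆, X i⁆ ∈ tailSpan K X (i + 1) := by
    rw [lie_lie]
    exact apply_apply_sub_mem_tailSpan_succ (ad K L z : L →ₗ[K] L) (ad K L w)
      (hX.lie_mem_tailSpan hn hX3 z) (hX.lie_mem_tailSpan hn hX3 w) i
  exact adDiag_eq_zero_iff.2 ⟨h 0, h 1⟩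

theorem finrank_range_adDiag_le (hX : IsStandardFiliformSeq X)
    (hn : (n : Submodule K L) = tailSpan K X 0) (hX3 : X 3 ≠ 0) :
    Module.finrank K (LinearMap.range (adDiag (K := K) X)) ≤ 2 := by
  classical
  let a : (L ⧸ tailSpan K X 1) × (L ⧸ tailSpan K X 2) := ((tailSpan K X 1).mkQ (X 0), 0)
  let b : (L ⧸ tailSpan K X 1) × (L ⧸ tailSpan K X 2) := (0, (tailSpan K X 2).mkQ (X 1))
  have hrange : LinearMap.range (adDiag (K := K) X) ≤ span K ↑({a, b} : Finset _) := by
    rintro _ ⟨y, rfl⟩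
    have h0 : ⁅X 0, y⁆ ∈ tailSpan K X 0 := by
      rw [← lie_skew]; exact neg_mem (lie_mem_tailSpan_zero hn y 0)
    have h1 : ⁅X 1, y⁆ ∈ tailSpan K X 1 := by
      rw [← lie_skew]; exact neg_mem (hX.lie_one_mem_tailSpan_one hn hX3 y)
    obtain ⟨s, hs⟩ := exists_sub_smul_mem_tailSpan_succ h0
    obtain ⟨t, ht⟩ := exists_sub_smul_mem_tailSpan_succ h1
    have : adDiag X y = s • a + t • b :=
      Prod.ext (by simpa [adDiag, a, b] using (Submodule.Quotient.eq _).2 hs)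
        (by simpa [adDiag, a, b] using (Submodule.Quotient.eq _).2 ht)
    rw [this]
    exact add_mem (smul_mem _ _ (subset_span (by simp))) (smul_mem _ _ (subset_span (by simp)))
  exact (Submodule.finrank_mono hrange).trans
    ((finrank_span_finset_le_card _).trans (Finset.card_le_two))

theorem isNilpotent_of_le_ker_adDiag [FiniteDimensional K L] (hX : IsStandardFiliformSeq X)
    (hn : (n : Submodule K L) = tailSpan K X 0) {N : ℕ} (hN : ∀ i, N ≤ i → X i = 0)
    {I : LieIdeal K L} (hI : (I : Submodule K L) ≤ LinearMap.ker (adDiag X)) (hII : ⁅I, I⁆ ≤ n) :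
    LieRing.IsNilpotent I := by
  rw [LieAlgebra.isNilpotent_iff_forall (R := K)]
  rintro ⟨x, hx⟩
  apply LieSubalgebra.isNilpotent_ad_of_isNilpotent_ad (I : LieSubalgebra K L) (x := ⟨x, hx⟩)
  refine Module.End.isNilpotent_of_mapsTo_succ (G := tailSpan K X) (m := 2) (fun k v hv ↦ ?_)
    (fun v ↦ ?_) (tailSpan_eq_bot hN)
  · exact apply_mem_tailSpan_add _ (hX.lie_mem_tailSpan_succ_of_adDiag_eq_zero (hI hx)) hv
  · rw [← hn]
    exact hII (LieSubmodule.lie_mem_lie hx (lie_mem_left K L I x v hx))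

theorem finrank_le_finrank_add_two [FiniteDimensional K L] [IsSolvable L]
    (hX : IsStandardFiliformSeq X) (hn : (n : Submodule K L) = tailSpan K X 0)
    (hmax : ∀ m : LieIdeal K L, LieRing.IsNilpotent m → m ≤ n)
    (hX3 : X 3 ≠ 0) {N : ℕ} (hN : ∀ i, N ≤ i → X i = 0) :
    Module.finrank K L ≤ Module.finrank K n + 2 := by
  let J : LieIdeal K L :=
    { toSubmodule := LinearMap.ker (adDiag X)
      lie_mem := fun {x y} _ ↦ hX.adDiag_lie hn hX3 x y }
  have hJn : J ≤ n := by
    refine LieIdeal.le_of_isSolvable ?_ fun I hIJ hII ↦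
      hmax I (hX.isNilpotent_of_le_ker_adDiag hn hN hIJ hII)
    rw [derivedSeries_def, derivedSeriesOfIdeal_succ, derivedSeriesOfIdeal_zero,
      LieSubmodule.lie_le_iff]
    exact fun x _ y _ ↦ hX.adDiag_lie hn hX3 x y
  have hker : Module.finrank K (LinearMap.ker (adDiag (K := K) X)) ≤ Module.finrank K n :=
    Submodule.finrank_mono (show (J : Submodule K L) ≤ n from hJn)
  have := LinearMap.finrank_range_add_finrank_ker (adDiag (K := K) X)
  have := hX.finrank_range_adDiag_le hn hX3
  omega

end IsStandardFiliformSeq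

end Filiform

theorem IsStandardFiliformSeq.extend_val {L : Type*} [LieRing L] {l : ℕ} (hl : 0 < l)
    {Xb : Fin l → L}
    (hbr : ∀ i : Fin l, ∀ hi : (i : ℕ) + 1 < l, 1 ≤ (i : ℕ) →
      ⁅Xb ⟨0, hl⟩, Xb i⁆ = Xb ⟨(i : ℕ) + 1, hi⟩)
    (hbrlast : ⁅Xb ⟨0, hl⟩, Xb ⟨l - 1, by omega⟩⁆ = 0)
    (hab : ∀ i j : Fin l, 1 ≤ (i : ℕ) → 1 ≤ (j : ℕ) → ⁅Xb i, Xb j⁆ = 0) :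
    IsStandardFiliformSeq (Function.extend Fin.val Xb 0) := by
  have hlt i (h : i < l) : Function.extend Fin.val Xb 0 i = Xb ⟨i, h⟩ :=
    Fin.val_injective.extend_apply Xb 0 ⟨i, h⟩
  have hge i (h : l ≤ i) : Function.extend Fin.val Xb 0 i = 0 := extend_val_eq_zero_of_le Xb h
  constructor
  · intro i hi
    rw [hlt 0 hl]
    rcases lt_trichotomy (i + 1) l with h | h | h
    · rw [hlt i (by omega), hlt (i + 1) h]
      exact hbr ⟨i, _⟩ h hi
    · rw [hlt i (by omega), hge (i + 1) h.ge]
      simpa [show i = l - 1 by omega] using hbrlast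
    · rw [hge i (by omega), hge (i + 1) (by omega), lie_zero]
  · intro i j hi hj
    by_cases hil : i < l
    · by_cases hjl : j < l
      · rw [hlt i hil, hlt j hjl]
        exact hab ⟨i, hil⟩ ⟨j, hjl⟩ hi hj
      · rw [hge j (by omega), lie_zero]
    · rw [hge i (by omega), zero_lie]

/-- If the nilradical of a finite-dimensional real solvable Lie algebra `g`
is the standard filiform Lie algebra `L_l` (`l ≥ 4`), then `dim g ≤ l + 2`: the codimension of
the nilradical is at most `2`. -/
theorem finrank_le_of_filiform_nilradical
    (g : Type*) [LieRing g] [LieAlgebra ℝ g] [Module.Finite ℝ g]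
    [LieAlgebra.IsSolvable g]
    (n : LieIdeal ℝ g) (hn : IsNilradical n)
    (l : ℕ) (hl : 4 ≤ l) (Xb : Fin l → g)
    (hindep : LinearIndependent ℝ Xb)
    (hspan : ∀ x : g, x ∈ n ↔ x ∈ Submodule.span ℝ (Set.range Xb))
    (hbr : ∀ i : Fin l, ∀ hi : (i : ℕ) + 1 < l, 1 ≤ (i : ℕ) →
      ⁅Xb ⟨0, by omega⟩, Xb i⁆ = Xb ⟨(i : ℕ) + 1, hi⟩)
    (hbrlast : ⁅Xb ⟨0, by omega⟩, Xb ⟨l - 1, by omega⟩⁆ = 0)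
    (hab : ∀ i j : Fin l, 1 ≤ (i : ℕ) → 1 ≤ (j : ℕ) → ⁅Xb i, Xb j⁆ = 0) :
    Module.finrank ℝ g ≤ l + 2 := by
  set X := Function.extend Fin.val Xb 0
  have hX : IsStandardFiliformSeq X := .extend_val (by omega) hbr hbrlast hab
  have hn_span : (n : Submodule ℝ g) = span ℝ (Set.range Xb) := Submodule.ext hspan
  have hn_tail : (n : Submodule ℝ g) = tailSpan ℝ X 0 :=
    hn_span.trans (tailSpan_zero_extend_val Xb).symm
  have hX3 : X 3 ≠ 0 :=
    (Fin.val_injective.extend_apply Xb 0 ⟨3, by omega⟩).trans_ne (hindep.ne_zero _)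
  have hN : ∀ i, l ≤ i → X i = 0 := fun _ ↦ extend_val_eq_zero_of_le Xb
  have hnl : Module.finrank ℝ n ≤ l := by
    have := finrank_range_le_card (R := ℝ) Xb
    rw [Fintype.card_fin] at this
    exact (Submodule.finrank_mono hn_span.le).trans this
  have := hX.finrank_le_finrank_add_two hn_tail hn.2 hX3 hN
  omega
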